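/- arXiv:1802.03848 — 3 statements merged into one kernel-verified Lean document; each statement's English description precedes it below -/
import Mathlib

section
/- A polyomino on the square lattice is convex (i.e., both row-convex and column-convex) if and only if its perimeter equals the perimeter of its circumscribed rectangle. -/
/-- Two unit lattice cells (indexed by their lower-left corners) share an edge. -/
def CellAdj (a b : ℤ × ℤ) : Prop :=
  (a.1 = b.1 ∧ (a.2 - b.2).natAbs = 1) ∨ (a.2 = b.2 ∧ (a.1 - b.1).natAbs = 1)

instance : ∀ a b : ℤ × ℤ, Decidable (CellAdj a b) := fun a b => by
  unfold CellAdj; infer_instance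

/-- A polyomino: a nonempty finite edge-connected set of unit lattice cells. -/
def IsPolyomino (S : Finset (ℤ × ℤ)) : Prop :=
  S.Nonempty ∧ ∀ a ∈ S, ∀ b ∈ S,
    Relation.ReflTransGen (fun x y => x ∈ S ∧ y ∈ S ∧ CellAdj x y) a b

/-- Row-convexity: the cells in every row form a contiguous segment. -/
def RowConvex (S : Finset (ℤ × ℤ)) : Prop :=
  ∀ x₁ x₂ x₃ y : ℤ, x₁ ≤ x₂ → x₂ ≤ x₃ → (x₁, y) ∈ S → (x₃, y) ∈ S → (x₂, y) ∈ S

/-- Column-convexity: the cells in every column form a contiguous segment. -/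
def ColConvex (S : Finset (ℤ × ℤ)) : Prop :=
  ∀ x y₁ y₂ y₃ : ℤ, y₁ ≤ y₂ → y₂ ≤ y₃ → (x, y₁) ∈ S → (x, y₃) ∈ S → (x, y₂) ∈ S

/-- The perimeter (boundary length) of a set of cells: each cell contributes its
four sides, minus the shared (interior) sides, each of which is counted twice
among ordered adjacent pairs. -/
def polyPerimeter (S : Finset (ℤ × ℤ)) : ℕ :=
  4 * S.card - ((S ×ˢ S).filter (fun p => CellAdj p.1 p.2)).card

/-! Count the boundary edges by direction. By translation invariance a set of cells has as many
left as right boundary edges, and as many bottom as top ones, so its perimeter is twice the number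
of cells with no right neighbour plus twice the number of cells with no upper neighbour. Every
occupied row contains such a right end, and exactly one iff the row is a segment; by connectedness
the occupied rows are all `h` rows of the bounding rectangle. Hence there are at least `h` right
ends, with equality iff the polyomino is row-convex, and symmetrically at least `w` top ends, with
equality iff it is column-convex. -/

open Finset

section Translation

variable {G : Type*} [AddCommGroup G] [DecidableEq G]

theorem card_filter_add_mem_eq_card_filter_sub_mem (S : Finset G) (v : G) :
    #{a ∈ S | a + v ∈ S} = #{a ∈ S | a - v ∈ S} :=
  card_nbij' (· + v) (· - v) (fun a ha => by simp_all) (fun a ha => by simp_all)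
    (fun a _ => add_sub_cancel_right a v) (fun a _ => sub_add_cancel a v)

theorem card_filter_sub_eq_card_filter_add_mem (S : Finset G) (v : G) :
    #{p ∈ S ×ˢ S | p.2 - p.1 = v} = #{a ∈ S | a + v ∈ S} :=
  card_nbij' Prod.fst (fun a => (a, a + v))
    (fun p hp => by
      simp only [coe_filter, mem_product, Set.mem_ofPred_eq] at hp ⊢
      rw [← hp.2, add_sub_cancel]; exact ⟨hp.1.1, hp.1.2⟩)
    (fun a ha => by simp_all)
    (fun p hp => by
      simp only [coe_filter, Set.mem_ofPred_eq] at hp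
      simp [← hp.2])
    (fun a _ => rfl)

end Translation

theorem cellAdj_iff_sub_mem (a b : ℤ × ℤ) :
    CellAdj a b ↔ b - a ∈ ({(1, 0), (-1, 0), (0, 1), (0, -1)} : Finset (ℤ × ℤ)) := by
  obtain ⟨a1, a2⟩ := a; obtain ⟨b1, b2⟩ := b
  simp only [CellAdj, Prod.mk_sub_mk, mem_insert, mem_singleton, Prod.mk.injEq]
  omega

theorem card_filter_cellAdj (S : Finset (ℤ × ℤ)) :
    #{p ∈ S ×ˢ S | CellAdj p.1 p.2} =
      2 * #{a ∈ S | a + (1, 0) ∈ S} + 2 * #{a ∈ S | a + (0, 1) ∈ S} := by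
  simp only [cellAdj_iff_sub_mem]
  rw [← sum_card_fiberwise_eq_card_filter _ _ fun p : (ℤ × ℤ) × (ℤ × ℤ) => p.2 - p.1]
  rw [sum_insert (by decide), sum_insert (by decide), sum_insert (by decide), sum_singleton]
  simp only [card_filter_sub_eq_card_filter_add_mem]
  have h₁ := card_filter_add_mem_eq_card_filter_sub_mem S (1, 0)
  have h₂ := card_filter_add_mem_eq_card_filter_sub_mem S (0, 1)
  simp only [sub_eq_add_neg, Prod.neg_mk, neg_zero] at h₁ h₂
  omega

def rightEnds (S : Finset (ℤ × ℤ)) : Finset (ℤ × ℤ) := {c ∈ S | (c.1 + 1, c.2) ∉ S}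

def topEnds (S : Finset (ℤ × ℤ)) : Finset (ℤ × ℤ) := {c ∈ S | (c.1, c.2 + 1) ∉ S}

theorem polyPerimeter_eq (S : Finset (ℤ × ℤ)) :
    polyPerimeter S = 2 * #(rightEnds S) + 2 * #(topEnds S) := by
  have hR := card_filter_add_card_filter_not (s := S) fun c => c + (1, 0) ∈ S
  have hT := card_filter_add_card_filter_not (s := S) fun c => c + (0, 1) ∈ S
  simp only [Prod.add_def, add_zero] at hR hT
  rw [polyPerimeter, card_filter_cellAdj]
  simp only [Prod.add_def, add_zero, rightEnds, topEnds]
  omega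

theorem exists_mem_rightEnds_of_mem {S : Finset (ℤ × ℤ)} {c : ℤ × ℤ} (hc : c ∈ S) :
    ∃ d ∈ rightEnds S, d.2 = c.2 ∧ c.1 ≤ d.1 ∧ ∀ x, c.1 ≤ x → x ≤ d.1 → (x, c.2) ∈ S := by
  obtain ⟨e, ⟨hce, hseg⟩, hmax⟩ := Int.exists_greatest_of_bdd
    (P := fun e => c.1 ≤ e ∧ ∀ x, c.1 ≤ x → x ≤ e → (x, c.2) ∈ S)
    ⟨S.sup' ⟨c, hc⟩ Prod.fst, fun e he => le_sup' Prod.fst (he.2 e he.1 le_rfl)⟩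
    ⟨c.1, le_rfl, fun x h₁ h₂ => le_antisymm h₂ h₁ ▸ hc⟩
  refine ⟨(e, c.2), mem_filter.2 ⟨hseg e hce le_rfl, fun hnext => ?_⟩, rfl, hce, hseg⟩
  have := hmax (e + 1) ⟨by omega, fun x h₁ h₂ => ?_⟩
  · omega
  · rcases h₂.lt_or_eq with h₂ | rfl
    exacts [hseg x h₁ (by omega), hnext]

theorem image_snd_rightEnds (S : Finset (ℤ × ℤ)) :
    (rightEnds S).image Prod.snd = S.image Prod.snd := by
  refine (image_subset_image (filter_subset _ _)).antisymm fun y hy => ?_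
  obtain ⟨c, hc, rfl⟩ := mem_image.1 hy
  obtain ⟨d, hd, hdc, -⟩ := exists_mem_rightEnds_of_mem hc
  exact mem_image.2 ⟨d, hd, hdc⟩

theorem rowConvex_iff_injOn_rightEnds (S : Finset (ℤ × ℤ)) :
    RowConvex S ↔ Set.InjOn Prod.snd (rightEnds S : Set (ℤ × ℤ)) := by
  constructor
  · intro h c hc d hd hcd
    have hle : ∀ {a b}, a ∈ rightEnds S → b ∈ S → a.2 = b.2 → b.1 ≤ a.1 := fun ha hb hab =>
      le_of_not_gt fun hlt => (mem_filter.1 ha).2 <|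
        h _ _ _ _ (by omega) hlt (mem_filter.1 ha).1 (by rw [hab]; exact hb)
    exact Prod.ext
      (le_antisymm (hle hd (mem_filter.1 hc).1 hcd.symm) (hle hc (mem_filter.1 hd).1 hcd)) hcd
  · intro hinj x₁ x₂ x₃ y h₁₂ h₂₃ h₁ h₃
    by_contra h₂
    obtain ⟨d, hd, hdy, -, hd₁⟩ := exists_mem_rightEnds_of_mem h₁
    obtain ⟨e, he, hey, he₃, -⟩ := exists_mem_rightEnds_of_mem h₃
    have hdx₂ : d.1 < x₂ := lt_of_not_ge fun h => h₂ (hd₁ x₂ h₁₂ h)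
    have := hinj hd he (hdy.trans hey.symm)
    simp only at he₃
    rw [this] at hdx₂
    omega

theorem card_image_snd_le_card_rightEnds (S : Finset (ℤ × ℤ)) :
    #(S.image Prod.snd) ≤ #(rightEnds S) :=
  image_snd_rightEnds S ▸ card_image_le

theorem rowConvex_iff_card_rightEnds_eq (S : Finset (ℤ × ℤ)) :
    RowConvex S ↔ #(rightEnds S) = #(S.image Prod.snd) := by
  rw [rowConvex_iff_injOn_rightEnds, ← card_image_iff, image_snd_rightEnds, eq_comm]

def transpose (S : Finset (ℤ × ℤ)) : Finset (ℤ × ℤ) := S.map (Equiv.prodComm ℤ ℤ).toEmbedding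

@[simp]
theorem mem_transpose {S : Finset (ℤ × ℤ)} {c : ℤ × ℤ} : c ∈ transpose S ↔ c.swap ∈ S :=
  mem_map_equiv

@[simp]
theorem card_transpose (S : Finset (ℤ × ℤ)) : #(transpose S) = #S :=
  card_map _

theorem colConvex_iff_rowConvex_transpose (S : Finset (ℤ × ℤ)) :
    ColConvex S ↔ RowConvex (transpose S) := by
  simp only [ColConvex, RowConvex, mem_transpose, Prod.swap_prod_mk]
  exact ⟨fun h x₁ x₂ x₃ y => h y x₁ x₂ x₃, fun h x y₁ y₂ y₃ => h y₁ y₂ y₃ x⟩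

theorem rightEnds_transpose (S : Finset (ℤ × ℤ)) :
    rightEnds (transpose S) = transpose (topEnds S) := by
  ext c
  simp [rightEnds, topEnds]

theorem image_snd_transpose (S : Finset (ℤ × ℤ)) :
    (transpose S).image Prod.snd = S.image Prod.fst := by
  ext y
  simp

theorem card_image_fst_le_card_topEnds (S : Finset (ℤ × ℤ)) :
    #(S.image Prod.fst) ≤ #(topEnds S) := by
  simpa only [image_snd_transpose, rightEnds_transpose, card_transpose] using
    card_image_snd_le_card_rightEnds (transpose S)

theorem colConvex_iff_card_topEnds_eq (S : Finset (ℤ × ℤ)) :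
    ColConvex S ↔ #(topEnds S) = #(S.image Prod.fst) := by
  simpa only [image_snd_transpose, rightEnds_transpose, card_transpose] using
    (colConvex_iff_rowConvex_transpose S).trans (rowConvex_iff_card_rightEnds_eq (transpose S))

theorem Relation.ReflTransGen.exists_eq_of_le {α : Type*} {r : α → α → Prop} {f : α → ℤ}
    (hf : ∀ x y, r x y → f y ≤ f x + 1) {a b : α} (hab : Relation.ReflTransGen r a b) {z : ℤ}
    (haz : f a ≤ z) (hzb : z ≤ f b) : ∃ c, Relation.ReflTransGen r a c ∧ f c = z := by
  induction hab with
  | refl => exact ⟨a, .refl, le_antisymm haz hzb⟩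
  | @tail c d hac hcd ih =>
    by_cases hzc : z ≤ f c
    · exact ih hzc
    · exact ⟨d, hac.tail hcd, by have := hf c d hcd; omega⟩

theorem CellAdj.le_add_one {a b : ℤ × ℤ} (h : CellAdj a b) :
    b.1 ≤ a.1 + 1 ∧ b.2 ≤ a.2 + 1 := by
  unfold CellAdj at h
  omega

theorem IsPolyomino.image_eq_Icc {S : Finset (ℤ × ℤ)} (hS : IsPolyomino S) (hne : S.Nonempty)
    {f : ℤ × ℤ → ℤ} (hf : ∀ a b, CellAdj a b → f b ≤ f a + 1) :
    S.image f = Icc (S.inf' hne f) (S.sup' hne f) := by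
  ext z
  refine ⟨fun hz => ?_, fun hz => ?_⟩
  · obtain ⟨c, hc, rfl⟩ := mem_image.1 hz
    exact mem_Icc.2 ⟨inf'_le f hc, le_sup' f hc⟩
  · obtain ⟨a, ha, hfa⟩ := exists_mem_eq_inf' hne f
    obtain ⟨b, hb, hfb⟩ := exists_mem_eq_sup' hne f
    obtain ⟨hza, hzb⟩ := mem_Icc.1 hz
    obtain ⟨c, hac, rfl⟩ := (hS.2 a ha b hb).exists_eq_of_le (fun x y hxy => hf x y hxy.2.2)
      (hfa ▸ hza) (hfb ▸ hzb)
    rcases hac.cases_tail with rfl | ⟨_, -, -, hc, -⟩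
    exacts [mem_image_of_mem f ha, mem_image_of_mem f hc]

theorem IsPolyomino.card_image_eq {S : Finset (ℤ × ℤ)} (hS : IsPolyomino S) (hne : S.Nonempty)
    {f : ℤ × ℤ → ℤ} (hf : ∀ a b, CellAdj a b → f b ≤ f a + 1) :
    (#(S.image f) : ℤ) = S.sup' hne f - S.inf' hne f + 1 := by
  obtain ⟨c, hc⟩ := id hne
  have hle : S.inf' hne f ≤ S.sup' hne f := (inf'_le f hc).trans (le_sup' f hc)
  rw [hS.image_eq_Icc hne hf, Int.card_Icc, Int.toNat_of_nonneg (by omega)]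
  ring

/-- A polyomino is convex (row- and column-convex) iff its perimeter equals the
perimeter `2(w + h)` of its circumscribed (bounding) rectangle. -/
theorem polyomino_convex_iff_perimeter_eq_bounding_rect (S : Finset (ℤ × ℤ))
    (hS : IsPolyomino S) (hne : S.Nonempty) :
    (RowConvex S ∧ ColConvex S) ↔
      (polyPerimeter S : ℤ) =
        2 * ((S.sup' hne Prod.fst - S.inf' hne Prod.fst + 1) +
             (S.sup' hne Prod.snd - S.inf' hne Prod.snd + 1)) := by
  rw [polyPerimeter_eq, rowConvex_iff_card_rightEnds_eq, colConvex_iff_card_topEnds_eq,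
    ← hS.card_image_eq hne fun a b h => h.le_add_one.1,
    ← hS.card_image_eq hne fun a b h => h.le_add_one.2]
  have hrows := card_image_snd_le_card_rightEnds S
  have hcols := card_image_fst_le_card_topEnds S
  push_cast
  omega
end

section
/- Every convex polyomino on the square lattice with area A and perimeter P contains an axis-aligned lattice square with side length at least 2A/P. -/
/-!
Let `k` be the length of the shortest among the bottom row, the top row, the leftmost column and
the rightmost column. The rows between the bottom and the top one reach at least as far right as
the shorter of those two, so a `k × k` square sits against the leftmost column. Deleting that
shortest side removes `k` cells and lowers `w + h` by one, where `w` and `h` count the occupied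
columns and rows; by induction `A ≤ s (w + h)` for the larger of `k` and the side found for the
smaller polyomino. Finally `P ≥ 2 (w + h)` for every finite set of cells, since each occupied
column has a top cell and each occupied row a rightmost cell.
-/

open Finset

def width (S : Finset (ℤ × ℤ)) : ℕ := #(S.image Prod.fst)

def height (S : Finset (ℤ × ℤ)) : ℕ := #(S.image Prod.snd)

theorem card_image_add_card_filter_le {α β γ : Type*} [DecidableEq α] [DecidableEq β]
    [LinearOrder γ] (S : Finset α) (f : α → β) (g : α → α) (φ : α → γ)
    (hf : ∀ a, f (g a) = f a) (hφ : ∀ a, φ a < φ (g a)) :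
    #(S.image f) + #(S.filter fun a => g a ∈ S) ≤ #S := by
  have hsurj : #(S.image f) ≤ #(S.filter fun a => g a ∉ S) := by
    refine card_le_card_of_surjOn f ?_
    intro b hb
    obtain ⟨a, ha, rfl⟩ := mem_image.1 hb
    obtain ⟨m, hm, hmax⟩ :=
      exists_max_image (S.filter fun b => f b = f a) φ ⟨a, mem_filter.2 ⟨ha, rfl⟩⟩
    rw [mem_filter] at hm
    refine ⟨m, mem_filter.2 ⟨hm.1, fun hgm => ?_⟩, hm.2⟩
    exact (hφ m).not_ge (hmax _ (mem_filter.2 ⟨hgm, (hf m).trans hm.2⟩))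
  have := card_filter_add_card_filter_not (s := S) fun a => g a ∈ S
  omega

theorem card_filter_add_neg_mem_eq {G : Type*} [AddGroup G] [DecidableEq G] (S : Finset G) (v : G) :
    #(S.filter fun p => p + -v ∈ S) = #(S.filter fun p => p + v ∈ S) := by
  have : S.filter (fun p => p + -v ∈ S) = (S.filter fun p => p + v ∈ S).image (· + v) := by
    ext q
    simp only [mem_filter, mem_image]
    constructor
    · rintro ⟨hq, hqv⟩
      exact ⟨q + -v, ⟨hqv, by simpa using hq⟩, by simp⟩
    · rintro ⟨p, ⟨hp, hpv⟩, rfl⟩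
      exact ⟨hpv, by simpa using hp⟩
  rw [this, card_image_of_injective _ (add_left_injective v)]

theorem cellAdj_iff (a b : ℤ × ℤ) :
    CellAdj a b ↔ b - a ∈ ({(0, 1), -(0, 1), (1, 0), -(1, 0)} : Finset (ℤ × ℤ)) := by
  obtain ⟨a₁, a₂⟩ := a
  obtain ⟨b₁, b₂⟩ := b
  simp only [CellAdj, mem_insert, mem_singleton, Prod.ext_iff, Prod.fst_sub, Prod.snd_sub,
    Prod.fst_neg, Prod.snd_neg]
  omega

theorem card_filter_cellAdj_le (S : Finset (ℤ × ℤ)) :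
    #((S ×ˢ S).filter fun p => CellAdj p.1 p.2) ≤
      2 * #(S.filter fun p => p + (0, 1) ∈ S) + 2 * #(S.filter fun p => p + (1, 0) ∈ S) := by
  set V : Finset (ℤ × ℤ) := {(0, 1), -(0, 1), (1, 0), -(1, 0)}
  have hsub : (S ×ˢ S).filter (fun p => CellAdj p.1 p.2) ⊆
      V.biUnion fun v => (S.filter fun p => p + v ∈ S).image fun p => (p, p + v) := by
    rintro ⟨a, b⟩ h
    simp only [mem_filter, mem_product] at h
    refine mem_biUnion.2 ⟨b - a, (cellAdj_iff a b).1 h.2, mem_image.2 ?_⟩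
    exact ⟨a, mem_filter.2 ⟨h.1.1, by simpa using h.1.2⟩, by simp⟩
  calc _ ≤ _ := card_le_card hsub
    _ ≤ ∑ v ∈ V, #((S.filter fun p => p + v ∈ S).image fun p => (p, p + v)) := card_biUnion_le
    _ ≤ ∑ v ∈ V, #(S.filter fun p => p + v ∈ S) := sum_le_sum fun v _ => card_image_le
    _ = _ := by
      rw [sum_insert (by decide), sum_insert (by decide), sum_insert (by decide), sum_singleton,
        card_filter_add_neg_mem_eq, card_filter_add_neg_mem_eq]
      ring

theorem two_mul_width_add_height_le_polyPerimeter (S : Finset (ℤ × ℤ)) :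
    2 * (width S + height S) ≤ polyPerimeter S := by
  have hcol := card_image_add_card_filter_le S Prod.fst (· + (0, 1)) Prod.snd (by simp) (by simp)
  have hrow := card_image_add_card_filter_le S Prod.snd (· + (1, 0)) Prod.fst (by simp) (by simp)
  have := card_filter_cellAdj_le S
  unfold polyPerimeter width height
  omega

theorem RowConvex.mem_of_mem_uIcc {S : Finset (ℤ × ℤ)} (hS : RowConvex S) {a b x y : ℤ}
    (ha : (a, y) ∈ S) (hb : (b, y) ∈ S) (hx : x ∈ Set.uIcc a b) : (x, y) ∈ S := by
  rcases le_total a b with hab | hba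
  · rw [Set.uIcc_of_le hab] at hx
    exact hS a x b y hx.1 hx.2 ha hb
  · rw [Set.uIcc_of_ge hba] at hx
    exact hS b x a y hx.1 hx.2 hb ha

def RowLinked (S : Finset (ℤ × ℤ)) : Prop :=
  ∀ p ∈ S, ∀ q ∈ S, ∀ y : ℤ, p.2 ≤ y → y < q.2 → ∃ x, (x, y) ∈ S ∧ (x, y + 1) ∈ S

theorem IsPolyomino.rowLinked {S : Finset (ℤ × ℤ)} (hS : IsPolyomino S) : RowLinked S := by
  intro p hp q hq y hpy hyq
  have hpath := hS.2 p hp q hq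
  clear hq
  induction hpath with
  | refl => omega
  | @tail b c _ hbc ih =>
    by_cases hby : y < b.2
    · exact ih hby
    obtain ⟨hb, hc, hadj⟩ := hbc
    obtain ⟨b₁, b₂⟩ := b
    obtain ⟨c₁, c₂⟩ := c
    obtain ⟨rfl, rfl, rfl⟩ : b₂ = y ∧ c₁ = b₁ ∧ c₂ = b₂ + 1 := by
      simp only [CellAdj] at hadj hby hyq
      omega
    exact ⟨_, hb, hc⟩

/-- The convex polyominoes and the empty set, in a form that survives deleting an extreme row
or column. -/
structure IsOrthoConvex (S : Finset (ℤ × ℤ)) : Prop where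
  row : RowConvex S
  col : ColConvex S
  linked : RowLinked S

theorem RowLinked.exists_mem_of_mem_uIcc {S : Finset (ℤ × ℤ)} (hl : RowLinked S)
    (hr : RowConvex S) {p q : ℤ × ℤ} (hp : p ∈ S) (hq : q ∈ S) (hpq : p.2 ≤ q.2) {X : ℤ}
    (hX : X ∈ Set.uIcc p.1 q.1) : ∃ y, p.2 ≤ y ∧ y ≤ q.2 ∧ (X, y) ∈ S := by
  obtain ⟨n, hn⟩ : ∃ n : ℕ, q.2 = p.2 + n := ⟨(q.2 - p.2).toNat, by omega⟩
  induction n generalizing p with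
  | zero => exact ⟨p.2, le_rfl, hpq, hr.mem_of_mem_uIcc hp (by rwa [show p.2 = q.2 by omega]) hX⟩
  | succ n ih =>
    obtain ⟨x, hx, hx'⟩ := hl p hp q hq p.2 le_rfl (by omega)
    by_cases hXx : X ∈ Set.uIcc p.1 x
    · exact ⟨p.2, le_rfl, hpq, hr.mem_of_mem_uIcc hp hx hXx⟩
    obtain ⟨y, hy, hy', hXy⟩ := ih hx' (by simp; omega)
      ((Set.uIcc_subset_uIcc_union_uIcc hX).resolve_left hXx) (by simp; omega)
    exact ⟨y, by simp at hy; omega, hy', hXy⟩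

theorem IsOrthoConvex.mem_of_mem_uIcc {S : Finset (ℤ × ℤ)} (hS : IsOrthoConvex S)
    {p q : ℤ × ℤ} {b y X : ℤ} (hp : p ∈ S) (hb : (b, y) ∈ S) (hq : q ∈ S)
    (hpy : p.2 ≤ y) (hyq : y ≤ q.2) (hXp : X ∈ Set.uIcc b p.1) (hXq : X ∈ Set.uIcc b q.1) :
    (X, y) ∈ S := by
  obtain ⟨y₁, -, hy₁, h₁⟩ := hS.linked.exists_mem_of_mem_uIcc hS.row hp hb hpy
    (Set.uIcc_comm b p.1 ▸ hXp)
  obtain ⟨y₂, hy₂, -, h₂⟩ := hS.linked.exists_mem_of_mem_uIcc hS.row hb hq hyq hXq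
  exact hS.col X y₁ y y₂ hy₁ hy₂ h₁ h₂

namespace IsOrthoConvex

variable {S : Finset (ℤ × ℤ)}

theorem filter_snd_ne (hS : IsOrthoConvex S) {y₀ : ℤ}
    (hy₀ : (∀ p ∈ S, y₀ ≤ p.2) ∨ ∀ p ∈ S, p.2 ≤ y₀) :
    IsOrthoConvex (S.filter fun p => p.2 ≠ y₀) where
  row x₁ x₂ x₃ y h₁ h₂ ha hb := by
    simp only [mem_filter] at ha hb ⊢
    exact ⟨hS.row x₁ x₂ x₃ y h₁ h₂ ha.1 hb.1, ha.2⟩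
  col x y₁ y₂ y₃ h₁ h₂ ha hb := by
    simp only [mem_filter] at ha hb ⊢
    refine ⟨hS.col x y₁ y₂ y₃ h₁ h₂ ha.1 hb.1, ?_⟩
    rcases hy₀ with hy₀ | hy₀
    · have := hy₀ _ ha.1; dsimp at this; omega
    · have := hy₀ _ hb.1; dsimp at this; omega
  linked p hp q hq y h₁ h₂ := by
    simp only [mem_filter] at hp hq ⊢
    obtain ⟨x, hx, hx'⟩ := hS.linked p hp.1 q hq.1 y h₁ h₂
    rcases hy₀ with hy₀ | hy₀
    · have := hy₀ _ hp.1; exact ⟨x, ⟨hx, by omega⟩, hx', by omega⟩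
    · have := hy₀ _ hq.1; exact ⟨x, ⟨hx, by omega⟩, hx', by omega⟩

theorem filter_fst_ne (hS : IsOrthoConvex S) {x₀ : ℤ}
    (hx₀ : (∀ p ∈ S, x₀ ≤ p.1) ∨ ∀ p ∈ S, p.1 ≤ x₀) :
    IsOrthoConvex (S.filter fun p => p.1 ≠ x₀) where
  row x₁ x₂ x₃ y h₁ h₂ ha hb := by
    simp only [mem_filter] at ha hb ⊢
    refine ⟨hS.row x₁ x₂ x₃ y h₁ h₂ ha.1 hb.1, ?_⟩
    rcases hx₀ with hx₀ | hx₀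
    · have := hx₀ _ ha.1; dsimp at this; omega
    · have := hx₀ _ hb.1; dsimp at this; omega
  col x y₁ y₂ y₃ h₁ h₂ ha hb := by
    simp only [mem_filter] at ha hb ⊢
    exact ⟨hS.col x y₁ y₂ y₃ h₁ h₂ ha.1 hb.1, ha.2⟩
  linked p hp q hq y h₁ h₂ := by
    simp only [mem_filter] at hp hq ⊢
    obtain ⟨x, hx, hx'⟩ := hS.linked p hp.1 q hq.1 y h₁ h₂
    by_cases hxx₀ : x = x₀
    · subst hxx₀
      -- the crossing edge lies on the deleted column; the next column inwards crosses too
      obtain ⟨X, hX, hXp, hXq⟩ : ∃ X, X ≠ x ∧ X ∈ Set.uIcc x p.1 ∧ X ∈ Set.uIcc x q.1 := by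
        simp only [Set.mem_uIcc]
        rcases hx₀ with hx₀ | hx₀
        · have := hx₀ _ hp.1; have := hx₀ _ hq.1; exact ⟨x + 1, by omega, by omega, by omega⟩
        · have := hx₀ _ hp.1; have := hx₀ _ hq.1; exact ⟨x - 1, by omega, by omega, by omega⟩
      exact ⟨X, ⟨hS.mem_of_mem_uIcc hp.1 hx hq.1 h₁ h₂.le hXp hXq, hX⟩,
        hS.mem_of_mem_uIcc hp.1 hx' hq.1 (by omega) h₂ hXp hXq, hX⟩
    · exact ⟨x, ⟨hx, hxx₀⟩, hx', hxx₀⟩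

end IsOrthoConvex

theorem exists_le_of_le_card {α : Type*} {T : Finset α} {f : α → ℤ} (hf : Set.InjOn f T)
    {m : ℤ} (hm : ∀ t ∈ T, m ≤ f t) {k : ℕ} (hk : 0 < k) (hkT : k ≤ #T) :
    ∃ t ∈ T, m + k - 1 ≤ f t := by
  by_contra! h
  have := card_le_card_of_injOn f (t := Ico m (m + k - 1))
    (fun t ht => mem_Ico.2 ⟨hm t ht, h t ht⟩) hf
  rw [Int.card_Ico] at this
  omega

theorem injOn_fst_filter_snd_eq (S : Finset (ℤ × ℤ)) (y : ℤ) :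
    Set.InjOn Prod.fst (S.filter fun p => p.2 = y : Set (ℤ × ℤ)) := fun _ hp _ hq h =>
  Prod.ext h ((mem_filter.1 hp).2.trans (mem_filter.1 hq).2.symm)

theorem injOn_snd_filter_fst_eq (S : Finset (ℤ × ℤ)) (x : ℤ) :
    Set.InjOn Prod.snd (S.filter fun p => p.1 = x : Set (ℤ × ℤ)) := fun _ hp _ hq h =>
  Prod.ext ((mem_filter.1 hp).2.trans (mem_filter.1 hq).2.symm) h

def HasSquare (S : Finset (ℤ × ℤ)) (s : ℕ) : Prop :=
  ∃ a b : ℤ, Ico a (a + s) ×ˢ Ico b (b + s) ⊆ S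

theorem HasSquare.mono {S T : Finset (ℤ × ℤ)} {s : ℕ} (hS : HasSquare S s) (hST : S ⊆ T) :
    HasSquare T s :=
  let ⟨a, b, h⟩ := hS
  ⟨a, b, h.trans hST⟩

theorem IsOrthoConvex.hasSquare {S : Finset (ℤ × ℤ)} (hS : IsOrthoConvex S)
    {pl pb pt : ℤ × ℤ} (hpl : pl ∈ S) (hl : ∀ p ∈ S, pl.1 ≤ p.1) (hb : ∀ p ∈ S, pb.2 ≤ p.2)
    (ht : ∀ p ∈ S, p.2 ≤ pt.2) {k : ℕ} (hkl : k ≤ #(S.filter fun p => p.1 = pl.1))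
    (hkb : k ≤ #(S.filter fun p => p.2 = pb.2)) (hkt : k ≤ #(S.filter fun p => p.2 = pt.2)) :
    HasSquare S k := by
  rcases Nat.eq_zero_or_pos k with rfl | hk
  · exact ⟨0, 0, by simp⟩
  obtain ⟨u, hu, hmin⟩ :=
    exists_min_image (S.filter fun p => p.1 = pl.1) Prod.snd ⟨pl, mem_filter.2 ⟨hpl, rfl⟩⟩
  obtain ⟨v, hv, huv⟩ := exists_le_of_le_card (injOn_snd_filter_fst_eq S pl.1) hmin hk hkl
  obtain ⟨a, ha, hla⟩ := exists_le_of_le_card (injOn_fst_filter_snd_eq S pb.2)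
    (fun p hp => hl p (mem_filter.1 hp).1) hk hkb
  obtain ⟨c, hc, hlc⟩ := exists_le_of_le_card (injOn_fst_filter_snd_eq S pt.2)
    (fun p hp => hl p (mem_filter.1 hp).1) hk hkt
  rw [mem_filter] at hu hv ha hc
  refine ⟨pl.1, u.2, fun ⟨x, y⟩ hxy => ?_⟩
  simp only [mem_product, mem_Ico] at hxy
  have hy : (pl.1, y) ∈ S := hS.col pl.1 u.2 y v.2 (by omega) (by omega)
    (by rw [← hu.2]; exact hu.1) (by rw [← hv.2]; exact hv.1)
  exact hS.mem_of_mem_uIcc ha.1 hy hc.1 (ha.2 ▸ hb _ hy) (hc.2 ▸ ht _ hy)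
    (by rw [Set.mem_uIcc]; omega) (by rw [Set.mem_uIcc]; omega)

theorem width_filter_le (S : Finset (ℤ × ℤ)) (P : ℤ × ℤ → Prop) [DecidablePred P] :
    width (S.filter P) ≤ width S :=
  card_le_card (image_subset_image (filter_subset P S))

theorem height_filter_le (S : Finset (ℤ × ℤ)) (P : ℤ × ℤ → Prop) [DecidablePred P] :
    height (S.filter P) ≤ height S :=
  card_le_card (image_subset_image (filter_subset P S))

theorem height_filter_snd_ne_lt {S : Finset (ℤ × ℤ)} {p : ℤ × ℤ} (hp : p ∈ S) :
    height (S.filter fun q => q.2 ≠ p.2) < height S :=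
  card_lt_card <| (ssubset_iff_of_subset (image_subset_image (filter_subset _ S))).2
    ⟨p.2, mem_image_of_mem _ hp, by simp⟩

theorem width_filter_fst_ne_lt {S : Finset (ℤ × ℤ)} {p : ℤ × ℤ} (hp : p ∈ S) :
    width (S.filter fun q => q.1 ≠ p.1) < width S :=
  card_lt_card <| (ssubset_iff_of_subset (image_subset_image (filter_subset _ S))).2
    ⟨p.1, mem_image_of_mem _ hp, by simp⟩

def SquareBounded (S : Finset (ℤ × ℤ)) : Prop :=
  ∃ s, HasSquare S s ∧ #S ≤ s * (width S + height S)

theorem SquareBounded.of_peel {S T : Finset (ℤ × ℤ)} {k : ℕ} (hT : SquareBounded T)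
    (hTS : T ⊆ S) (hk : HasSquare S k) (hcard : #S = #T + k)
    (hdim : width T + height T < width S + height S) : SquareBounded S := by
  obtain ⟨s, hs, hTs⟩ := hT
  refine ⟨max s k, ?_, ?_⟩
  · rcases max_choice s k with h | h <;> rw [h]
    exacts [hs.mono hTS, hk]
  · calc #S = #T + k := hcard
      _ ≤ max s k * (width T + height T) + max s k :=
        add_le_add (hTs.trans (Nat.mul_le_mul_right _ (le_max_left s k))) (le_max_right s k)
      _ = max s k * (width T + height T + 1) := by ring
      _ ≤ max s k * (width S + height S) := Nat.mul_le_mul_left _ hdim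

namespace IsOrthoConvex

variable {S : Finset (ℤ × ℤ)}

theorem squareBounded_of_peel_row (hS : IsOrthoConvex S)
    (ih : ∀ T ⊂ S, IsOrthoConvex T → SquareBounded T) {p : ℤ × ℤ} (hp : p ∈ S)
    (hextr : (∀ q ∈ S, p.2 ≤ q.2) ∨ ∀ q ∈ S, q.2 ≤ p.2) {k : ℕ} (hk : HasSquare S k)
    (hrow : #(S.filter fun q => q.2 = p.2) = k) : SquareBounded S := by
  have hTS : (S.filter fun q => q.2 ≠ p.2) ⊂ S := filter_ssubset.2 ⟨p, hp, by simp⟩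
  refine (ih _ hTS (hS.filter_snd_ne hextr)).of_peel hTS.subset hk ?_ ?_
  · rw [← hrow, add_comm]
    exact (card_filter_add_card_filter_not _).symm
  · have := width_filter_le S fun q => q.2 ≠ p.2
    have := height_filter_snd_ne_lt hp
    omega

theorem squareBounded_of_peel_col (hS : IsOrthoConvex S)
    (ih : ∀ T ⊂ S, IsOrthoConvex T → SquareBounded T) {p : ℤ × ℤ} (hp : p ∈ S)
    (hextr : (∀ q ∈ S, p.1 ≤ q.1) ∨ ∀ q ∈ S, q.1 ≤ p.1) {k : ℕ} (hk : HasSquare S k)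
    (hcol : #(S.filter fun q => q.1 = p.1) = k) : SquareBounded S := by
  have hTS : (S.filter fun q => q.1 ≠ p.1) ⊂ S := filter_ssubset.2 ⟨p, hp, by simp⟩
  refine (ih _ hTS (hS.filter_fst_ne hextr)).of_peel hTS.subset hk ?_ ?_
  · rw [← hcol, add_comm]
    exact (card_filter_add_card_filter_not _).symm
  · have := width_filter_fst_ne_lt hp
    have := height_filter_le S fun q => q.1 ≠ p.1
    omega

theorem squareBounded (hS : IsOrthoConvex S) : SquareBounded S := by
  induction S using Finset.strongInduction with
  | H S ih =>
  rcases S.eq_empty_or_nonempty with rfl | hne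
  · exact ⟨0, ⟨0, 0, by simp⟩, by simp⟩
  obtain ⟨pb, hpb, hb⟩ := exists_min_image S Prod.snd hne
  obtain ⟨pt, hpt, ht⟩ := exists_max_image S Prod.snd hne
  obtain ⟨pl, hpl, hl⟩ := exists_min_image S Prod.fst hne
  obtain ⟨pr, hpr, hr⟩ := exists_max_image S Prod.fst hne
  set k := min (min #(S.filter fun q => q.2 = pb.2) #(S.filter fun q => q.2 = pt.2))
    (min #(S.filter fun q => q.1 = pl.1) #(S.filter fun q => q.1 = pr.1))
  have hk : HasSquare S k := hS.hasSquare hpl hl hb ht (by omega) (by omega) (by omega)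
  rcases (by omega : k = #(S.filter fun q => q.2 = pb.2) ∨ k = #(S.filter fun q => q.2 = pt.2) ∨
      k = #(S.filter fun q => q.1 = pl.1) ∨ k = #(S.filter fun q => q.1 = pr.1))
    with h | h | h | h
  · exact hS.squareBounded_of_peel_row ih hpb (.inl hb) hk h.symm
  · exact hS.squareBounded_of_peel_row ih hpt (.inr ht) hk h.symm
  · exact hS.squareBounded_of_peel_col ih hpl (.inl hl) hk h.symm
  · exact hS.squareBounded_of_peel_col ih hpr (.inr hr) hk h.symm

end IsOrthoConvex

/-- Every convex polyomino of area `A` and perimeter `P` contains an axis-aligned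
lattice square of side length at least `2A/P`. -/
theorem convex_polyomino_contains_square (S : Finset (ℤ × ℤ))
    (hS : IsPolyomino S) (hrow : RowConvex S) (hcol : ColConvex S) :
    ∃ (a b : ℤ) (s : ℕ),
      (2 * (S.card : ℚ)) / (polyPerimeter S : ℚ) ≤ (s : ℚ) ∧
      (Finset.Ico a (a + (s : ℤ))) ×ˢ (Finset.Ico b (b + (s : ℤ))) ⊆ S := by
  obtain ⟨s, ⟨a, b, hsq⟩, hcard⟩ := (IsOrthoConvex.mk hrow hcol hS.rowLinked).squareBounded
  have hP := two_mul_width_add_height_le_polyPerimeter S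
  have hw : 0 < width S := card_pos.2 (hS.1.image _)
  refine ⟨a, b, s, ?_, hsq⟩
  rw [div_le_iff₀ (by exact_mod_cast (by omega : 0 < polyPerimeter S))]
  have : 2 * #S ≤ s * polyPerimeter S :=
    calc 2 * #S ≤ s * (2 * (width S + height S)) := by linarith
      _ ≤ s * polyPerimeter S := Nat.mul_le_mul_left s hP
  exact_mod_cast this
end

section
/- Let J₁ = I + θ₁ A and J₂ = I + θ₂ A where A is the adjacency matrix of a d-regular graph on p vertices and 0 < θ₁, θ₂ with d·max(θ₁,θ₂) < 1. Then Tr[(J₁ − J₂)(J₂^{-1} − J₁^{-1})] ≤ (θ₁ − θ₂)²/(1 − d·max(θ₁,θ₂))² · Tr(A²). -/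
open Matrix Finset

section Helpers
variable {p : ℕ}

variable {p : ℕ}

lemma myConj_trace (U X : Matrix (Fin p) (Fin p) ℝ) (hU : star U * U = 1) :
    (U * X * star U).trace = X.trace := by
  rw [trace_mul_cycle, hU, one_mul]

lemma myConj_mul (U X Y : Matrix (Fin p) (Fin p) ℝ) (hU : star U * U = 1) :
    (U * X * star U) * (U * Y * star U) = U * (X * Y) * star U := by
  calc U * X * star U * (U * Y * star U)
      = U * X * (star U * U) * Y * star U := by noncomm_ring
    _ = U * (X * Y) * star U := by rw [hU]; noncomm_ring


lemma eig_bound {p : ℕ} (G : SimpleGraph (Fin p)) [DecidableRel G.Adj] (d : ℕ)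
    (hreg : G.IsRegularOfDegree d) (hA : (G.adjMatrix ℝ).IsHermitian) (j : Fin p) :
    |hA.eigenvalues j| ≤ (d : ℝ) := by
  set v : Fin p → ℝ := ⇑(hA.eigenvectorBasis j) with hv
  have hmv : G.adjMatrix ℝ *ᵥ v = hA.eigenvalues j • v := hA.mulVec_eigenvectorBasis j
  have hvne : v ≠ 0 := by
    have := hA.eigenvectorBasis.orthonormal.ne_zero j
    intro h
    apply this
    ext k
    exact congrFun h k
  have hne : (univ : Finset (Fin p)).Nonempty := by
    by_contra h
    rw [Finset.not_nonempty_iff_eq_empty, Finset.univ_eq_empty_iff] at h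
    exact hvne (funext fun k => h.elim k)
  obtain ⟨i, -, hi⟩ := Finset.exists_mem_eq_sup' hne (fun k => |v k|)
  have hle : ∀ k, |v k| ≤ |v i| := fun k => hi ▸ Finset.le_sup' (fun k => |v k|) (mem_univ k)
  have hvi : 0 < |v i| := by
    rcases (abs_nonneg (v i)).lt_or_eq with h | h
    · exact h
    · exfalso; apply hvne; ext k
      have := hle k
      rw [← h] at this
      simpa using le_antisymm this (abs_nonneg _)
  have key : |hA.eigenvalues j| * |v i| ≤ (d : ℝ) * |v i| := by
    have h1 : (G.adjMatrix ℝ *ᵥ v) i = ∑ u ∈ G.neighborFinset i, v u := by simp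
    calc |hA.eigenvalues j| * |v i| = |(G.adjMatrix ℝ *ᵥ v) i| := by
          rw [hmv]; simp [abs_mul]
      _ = |∑ u ∈ G.neighborFinset i, v u| := by rw [h1]
      _ ≤ ∑ u ∈ G.neighborFinset i, |v u| := Finset.abs_sum_le_sum_abs _ _
      _ ≤ ∑ u ∈ G.neighborFinset i, |v i| := Finset.sum_le_sum fun u _ => hle u
      _ = (d : ℝ) * |v i| := by
          rw [Finset.sum_const, nsmul_eq_mul, G.card_neighborFinset_eq_degree, hreg i]
  exact le_of_mul_le_mul_right key hvi

end Helpers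

/-- For `J₁ = I + θ₁A`, `J₂ = I + θ₂A` with `A` the adjacency matrix of a `d`-regular
graph on `p` vertices and `0 < θ₁, θ₂` with `d·max(θ₁,θ₂) < 1`:
`Tr[(J₁ − J₂)(J₂⁻¹ − J₁⁻¹)] ≤ (θ₁ − θ₂)²/(1 − d·max(θ₁,θ₂))² · Tr(A²)`. -/
theorem trace_KL_bound_regular_graph {p : ℕ} (G : SimpleGraph (Fin p))
    [DecidableRel G.Adj] (d : ℕ) (hreg : G.IsRegularOfDegree d)
    (θ₁ θ₂ : ℝ) (h₁ : 0 < θ₁) (h₂ : 0 < θ₂)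
    (hd : (d : ℝ) * max θ₁ θ₂ < 1) :
    (((1 + θ₁ • G.adjMatrix ℝ) - (1 + θ₂ • G.adjMatrix ℝ)) *
        ((1 + θ₂ • G.adjMatrix ℝ)⁻¹ - (1 + θ₁ • G.adjMatrix ℝ)⁻¹)).trace ≤
      (θ₁ - θ₂) ^ 2 / (1 - (d : ℝ) * max θ₁ θ₂) ^ 2 *
        (G.adjMatrix ℝ * G.adjMatrix ℝ).trace := by
  have hA : (G.adjMatrix ℝ).IsHermitian := by
    rw [Matrix.IsHermitian, conjTranspose_eq_transpose_of_trivial, G.transpose_adjMatrix]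
  set A := G.adjMatrix ℝ
  set U : Matrix (Fin p) (Fin p) ℝ := ↑hA.eigenvectorUnitary with hUdef
  set μ : Fin p → ℝ := hA.eigenvalues with hμdef
  have hUU : star U * U = 1 := Matrix.mem_unitaryGroup_iff'.mp hA.eigenvectorUnitary.2
  have hUU' : U * star U = 1 := Matrix.mem_unitaryGroup_iff.mp hA.eigenvectorUnitary.2
  have hAspec : A = U * diagonal μ * star U := by
    have := hA.spectral_theorem
    simpa using this
  -- positivity of diagonal entries
  have hm : 0 < 1 - (d : ℝ) * max θ₁ θ₂ := by linarith
  have hpos : ∀ θ : ℝ, 0 < θ → θ ≤ max θ₁ θ₂ → ∀ j, 1 - (d : ℝ) * max θ₁ θ₂ ≤ 1 + θ * μ j := by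
    intro θ hθ hθm j
    have hb : |μ j| ≤ (d : ℝ) := eig_bound G d hreg hA j
    have : θ * μ j ≥ -(θ * (d:ℝ)) := by nlinarith [abs_le.mp hb]
    nlinarith [mul_le_mul_of_nonneg_left hθm (Nat.cast_nonneg d : (0:ℝ) ≤ d)]
  have hJ : ∀ θ : ℝ, 1 + θ • A = U * diagonal (fun j => 1 + θ * μ j) * star U := by
    intro θ
    have : diagonal (fun j => 1 + θ * μ j) = 1 + θ • diagonal μ := by
      rw [← diagonal_one, ← diagonal_smul, ← diagonal_add]
      rfl
    rw [this, mul_add, add_mul, mul_one, hUU', Matrix.mul_smul, Matrix.smul_mul, hAspec]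
  have hJinv : ∀ θ : ℝ, (∀ j, 1 + θ * μ j ≠ 0) →
      (1 + θ • A)⁻¹ = U * diagonal (fun j => (1 + θ * μ j)⁻¹) * star U := by
    intro θ hne
    apply inv_eq_right_inv
    rw [hJ θ, myConj_mul _ _ _ hUU, diagonal_mul_diagonal]
    have : (fun j => (1 + θ * μ j) * (1 + θ * μ j)⁻¹) = fun _ => (1:ℝ) := by
      funext j; exact mul_inv_cancel₀ (hne j)
    rw [this, diagonal_one, mul_one, hUU']
  -- nonvanishing
  have hθ₁ := fun j => hpos θ₁ h₁ (le_max_left _ _) j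
  have hθ₂ := fun j => hpos θ₂ h₂ (le_max_right _ _) j
  have hp₁ : ∀ j, 0 < 1 + θ₁ * μ j := fun j => lt_of_lt_of_le hm (hθ₁ j)
  have hp₂ : ∀ j, 0 < 1 + θ₂ * μ j := fun j => lt_of_lt_of_le hm (hθ₂ j)
  -- the two factors as conjugated diagonals
  have hdiff : (1 + θ₁ • A) - (1 + θ₂ • A)
      = U * diagonal (fun j => (1 + θ₁ * μ j) - (1 + θ₂ * μ j)) * star U := by
    rw [hJ θ₁, hJ θ₂, ← sub_mul, ← mul_sub, diagonal_sub]
  have hinvdiff : (1 + θ₂ • A)⁻¹ - (1 + θ₁ • A)⁻¹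
      = U * diagonal (fun j => (1 + θ₂ * μ j)⁻¹ - (1 + θ₁ * μ j)⁻¹) * star U := by
    rw [hJinv θ₂ (fun j => (hp₂ j).ne'), hJinv θ₁ (fun j => (hp₁ j).ne'),
      ← sub_mul, ← mul_sub, diagonal_sub]
  have hLHS : (((1 + θ₁ • A) - (1 + θ₂ • A)) * ((1 + θ₂ • A)⁻¹ - (1 + θ₁ • A)⁻¹)).trace
      = ∑ j, ((1 + θ₁ * μ j) - (1 + θ₂ * μ j)) * ((1 + θ₂ * μ j)⁻¹ - (1 + θ₁ * μ j)⁻¹) := by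
    rw [hdiff, hinvdiff, myConj_mul _ _ _ hUU, myConj_trace _ _ hUU,
      diagonal_mul_diagonal, trace_diagonal]
  have hRHS : (A * A).trace = ∑ j, μ j ^ 2 := by
    rw [hAspec, myConj_mul _ _ _ hUU, myConj_trace _ _ hUU, diagonal_mul_diagonal,
      trace_diagonal]
    exact Finset.sum_congr rfl fun j _ => (sq (μ j)).symm
  rw [hLHS, hRHS, Finset.mul_sum]
  apply Finset.sum_le_sum
  intro j _
  set a := 1 + θ₁ * μ j
  set b := 1 + θ₂ * μ j
  have hab : a - b = (θ₁ - θ₂) * μ j := by simp only [a, b]; ring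
  have hba : b⁻¹ - a⁻¹ = (a - b) / (a * b) := by
    rw [inv_eq_one_div, inv_eq_one_div, div_sub_div _ _ (hp₂ j).ne' (hp₁ j).ne', one_mul,
      mul_one, mul_comm b a]
  rw [hba, hab]
  have h1 : (θ₁ - θ₂) * μ j * ((θ₁ - θ₂) * μ j / (a * b))
      = ((θ₁ - θ₂) ^ 2 * μ j ^ 2) / (a * b) := by ring
  have h2 : (θ₁ - θ₂) ^ 2 / (1 - (d:ℝ) * max θ₁ θ₂) ^ 2 * μ j ^ 2
      = ((θ₁ - θ₂) ^ 2 * μ j ^ 2) / (1 - (d:ℝ) * max θ₁ θ₂) ^ 2 := by ring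
  rw [h1, h2]
  apply div_le_div_of_nonneg_left (by positivity) (by positivity)
  calc (1 - (d:ℝ) * max θ₁ θ₂) ^ 2 = (1 - (d:ℝ) * max θ₁ θ₂) * (1 - (d:ℝ) * max θ₁ θ₂) := sq _
    _ ≤ a * b := mul_le_mul (hθ₁ j) (hθ₂ j) hm.le (hp₁ j).le
end
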